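/- Let c > 0, δ > 0, and f : [−c, c] → {1,0,−1} satisfy: whenever x₁+x₂+x₃ = 0 with all xᵢ ∈ [−c,c], the multiset {f(x₁),f(x₂),f(x₃)} is consistent. Then there exists X ∈ {1,0,−1} such that for every integer n with 0 < n < c/δ, f(nδ) = X and f(−nδ) = −X. -/

import Mathlib

def Consistent (x y z : ℤ) : Prop :=
  ({x, y, z} : Multiset ℤ) = {1, 1, -1} ∨
  ({x, y, z} : Multiset ℤ) = {1, 0, -1} ∨
  ({x, y, z} : Multiset ℤ) = {1, -1, -1} ∨
  ({x, y, z} : Multiset ℤ) = {0, 0, 0}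

/-!
A consistent triple with two equal entries `a, a` has third entry `-a`. Applied to `(0, 0, 0)` this
gives `f 0 = 0`, then to `(x, -x, 0)` that `f` is odd, and to `(m δ, δ, -(m + 1) δ)` that
`f ((m + 1) δ) = f δ` once `f (m δ) = f δ`.
-/

instance (x y z : ℤ) : Decidable (Consistent x y z) := by
  unfold Consistent
  infer_instance

namespace Consistent

variable {x y z : ℤ}

theorem mem_of_mem {w : ℤ} (h : Consistent x y z) (hw : w ∈ ({x, y, z} : Multiset ℤ)) :
    w = 1 ∨ w = 0 ∨ w = -1 := by
  rcases h with h | h | h | h <;> rw [h] at hw <;>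
    simp only [Multiset.insert_eq_cons, Multiset.mem_cons, Multiset.mem_singleton] at hw <;> omega

theorem left_mem (h : Consistent x y z) : x = 1 ∨ x = 0 ∨ x = -1 :=
  h.mem_of_mem (by simp)

theorem middle_mem (h : Consistent x y z) : y = 1 ∨ y = 0 ∨ y = -1 :=
  h.mem_of_mem (by simp)

theorem right_mem (h : Consistent x y z) : z = 1 ∨ z = 0 ∨ z = -1 :=
  h.mem_of_mem (by simp)

theorem middle_eq_neg_left (h : Consistent x y 0) : y = -x := by
  rcases h.left_mem with rfl | rfl | rfl <;> rcases h.middle_mem with rfl | rfl | rfl <;>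
    revert h <;> decide

theorem right_eq_neg_left (h : Consistent x x y) : y = -x := by
  rcases h.left_mem with rfl | rfl | rfl <;> rcases h.right_mem with rfl | rfl | rfl <;>
    revert h <;> decide

theorem eq_zero_of_self (h : Consistent x x x) : x = 0 := by
  have := h.right_eq_neg_left
  omega

end Consistent

def ConsistentOn {G : Type*} [AddCommGroup G] (f : G → ℤ) (s : Set G) : Prop :=
  ∀ x₁ ∈ s, ∀ x₂ ∈ s, ∀ x₃ ∈ s, x₁ + x₂ + x₃ = 0 → Consistent (f x₁) (f x₂) (f x₃)

section SymmetricInterval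

open Set

variable {G : Type*} [AddCommGroup G] [LinearOrder G] [IsOrderedAddMonoid G] {c x : G}

theorem zero_mem_Icc_neg_of_mem (hx : x ∈ Icc (-c) c) : (0 : G) ∈ Icc (-c) c :=
  have hc : 0 ≤ c := neg_le_self_iff.mp (hx.1.trans hx.2)
  ⟨neg_nonpos.mpr hc, hc⟩

theorem neg_mem_Icc_neg_of_mem (hx : x ∈ Icc (-c) c) : -x ∈ Icc (-c) c :=
  neg_mem_Icc_iff.mpr (by rwa [neg_neg])

end SymmetricInterval

namespace ConsistentOn

open Set

variable {G : Type*} [AddCommGroup G] {f : G → ℤ}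

theorem map_zero {s : Set G} (hf : ConsistentOn f s) (h0 : (0 : G) ∈ s) : f 0 = 0 :=
  (hf 0 h0 0 h0 0 h0 (by simp)).eq_zero_of_self

variable [LinearOrder G] [IsOrderedAddMonoid G] {c : G}

theorem map_mem (hf : ConsistentOn f (Icc (-c) c)) {x : G} (hx : x ∈ Icc (-c) c) :
    f x = 1 ∨ f x = 0 ∨ f x = -1 :=
  (hf x hx (-x) (neg_mem_Icc_neg_of_mem hx) 0 (zero_mem_Icc_neg_of_mem hx) (by simp)).left_mem

theorem map_neg (hf : ConsistentOn f (Icc (-c) c)) {x : G} (hx : x ∈ Icc (-c) c) :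
    f (-x) = -f x := by
  have h0 := zero_mem_Icc_neg_of_mem hx
  have h := hf x hx (-x) (neg_mem_Icc_neg_of_mem hx) 0 h0 (by simp)
  rw [hf.map_zero h0] at h
  exact h.middle_eq_neg_left

theorem map_nsmul (hf : ConsistentOn f (Icc (-c) c)) {δ : G} (hδ : 0 ≤ δ) {n : ℕ}
    (hn : 0 < n) (hnc : n • δ ≤ c) : f (n • δ) = f δ := by
  induction n, hn using Nat.le_induction with
  | base => rw [one_nsmul]
  | succ m hm ih =>
    have hmem : ∀ k ≤ m + 1, k • δ ∈ Icc (-c) c := fun k hk =>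
      ⟨(neg_nonpos.mpr ((nsmul_nonneg hδ _).trans hnc)).trans (nsmul_nonneg hδ k),
        (nsmul_le_nsmul_left hδ hk).trans hnc⟩
    have h := hf _ (hmem m m.le_succ) _ (by simpa using hmem 1 (by omega))
      _ (neg_mem_Icc_neg_of_mem (hmem (m + 1) le_rfl)) (by rw [succ_nsmul]; abel)
    rw [ih ((hmem m m.le_succ).2), hf.map_neg (hmem (m + 1) le_rfl)] at h
    exact neg_inj.mp h.right_eq_neg_left

end ConsistentOn

theorem stmt3_general (c δ : ℝ) (hδ : 0 < δ)
    (f : ℝ → ℤ)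
    (hcons : ∀ x₁ ∈ Set.Icc (-c) c, ∀ x₂ ∈ Set.Icc (-c) c, ∀ x₃ ∈ Set.Icc (-c) c,
      x₁ + x₂ + x₃ = 0 → Consistent (f x₁) (f x₂) (f x₃)) :
    ∃ X : ℤ, (X = 1 ∨ X = 0 ∨ X = -1) ∧
      ∀ n : ℤ, 0 < n → (n : ℝ) < c / δ →
        f ((n : ℝ) * δ) = X ∧ f (-((n : ℝ) * δ)) = -X := by
  have hf : ConsistentOn f (Set.Icc (-c) c) := hcons
  by_cases hδc : δ ≤ c
  swap
  · refine ⟨0, by norm_num, fun n hn hnc => absurd ((lt_div_iff₀ hδ).mp hnc) ?_⟩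
    have : (1 : ℝ) ≤ n := by exact_mod_cast hn
    nlinarith
  have hδmem : δ ∈ Set.Icc (-c) c := ⟨by linarith, hδc⟩
  refine ⟨f δ, hf.map_mem hδmem, fun n hn hnc => ?_⟩
  lift n to ℕ using hn.le
  have hnδ : (n : ℝ) * δ ≤ c := by simpa using ((lt_div_iff₀ hδ).mp hnc).le
  have hnδmem : (n : ℝ) * δ ∈ Set.Icc (-c) c := ⟨by nlinarith, hnδ⟩
  have hmap : f ((n : ℝ) * δ) = f δ := by
    simpa using hf.map_nsmul hδ.le (by omega) (by simpa using hnδ)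
  simp only [Int.cast_natCast]
  exact ⟨hmap, by rw [hf.map_neg hnδmem, hmap]⟩

theorem stmt3 (c δ : ℝ) (hc : 0 < c) (hδ : 0 < δ)
    (f : ℝ → ℤ)
    (hrange : ∀ x ∈ Set.Icc (-c) c, f x = 1 ∨ f x = 0 ∨ f x = -1)
    (hcons : ∀ x₁ ∈ Set.Icc (-c) c, ∀ x₂ ∈ Set.Icc (-c) c, ∀ x₃ ∈ Set.Icc (-c) c,
      x₁ + x₂ + x₃ = 0 → Consistent (f x₁) (f x₂) (f x₃)) :
    ∃ X : ℤ, (X = 1 ∨ X = 0 ∨ X = -1) ∧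
      ∀ n : ℤ, 0 < n → (n : ℝ) < c / δ →
        f ((n : ℝ) * δ) = X ∧ f (-((n : ℝ) * δ)) = -X :=
  stmt3_general c δ hδ f hcons
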